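/- Let T be a tree with at least 3 leaves. If a, b, c ∈ V(T) form a triametral triple, i.e. d_T(a,b) + d_T(a,c) + d_T(b,c) = tr(T), then each of a, b, c is a leaf of T. -/

import Mathlib

/-!
Fix `b` and `c`; then `a` maximises `f x = d(x,b) + d(x,c)`. A leaf `l ∉ {b, c}` has two
distinct neighbours if it lies on the `b`–`c` geodesic, so `f a ≥ f l > d(b,c)` and `a` lies
off that geodesic. In a tree every neighbour of `a` is one step closer to, or one step farther
from, any given vertex, and exactly one neighbour is closer to `b`, exactly one to `c`.
The neighbour closer to `b` cannot be farther from `c` (that would put `a` on the geodesic), so it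
is also the one closer to `c`; any other neighbour would be farther from both and increase `f`.
-/

open Finset

/-- The triameter of a graph `G`: the maximum of `d(a,b) + d(a,c) + d(b,c)`
over all triples of vertices `a, b, c`. -/
noncomputable def SimpleGraph.triameter {V : Type*} [Fintype V] (G : SimpleGraph V) : ℕ :=
  Finset.univ.sup fun p : V × V × V =>
    G.dist p.1 p.2.1 + G.dist p.1 p.2.2 + G.dist p.2.1 p.2.2

namespace SimpleGraph

variable {V : Type*} {G : SimpleGraph V} {a b c y : V}

theorem dist_add_dist_add_dist_le_triameter [Fintype V] (a b c : V) :
    G.dist a b + G.dist a c + G.dist b c ≤ G.triameter :=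
  Finset.le_sup (f := fun p : V × V × V =>
    G.dist p.1 p.2.1 + G.dist p.1 p.2.2 + G.dist p.2.1 p.2.2) (mem_univ (a, b, c))

theorem Reachable.exists_adj_dist_add_one_eq (h : G.Reachable a b) (hab : a ≠ b) :
    ∃ y, G.Adj a y ∧ G.dist y b + 1 = G.dist a b := by
  obtain ⟨p, hp⟩ := h.exists_walk_length_eq_dist
  cases p with
  | nil => exact absurd rfl hab
  | cons hay q =>
    refine ⟨_, hay, le_antisymm ?_ ?_⟩
    · simpa [← hp] using dist_le q
    · calc G.dist a b ≤ G.dist a _ + G.dist _ b := hay.reachable.dist_triangle_left b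
        _ = G.dist _ b + 1 := by rw [dist_eq_one_iff_adj.mpr hay, add_comm]

theorem IsAcyclic.eq_penultimate_of_adj_of_dist_lt (hG : G.IsAcyclic) {p : G.Walk b a}
    (hp : p.IsPath) (hay : G.Adj a y) (hyb : G.Reachable y b) (hlt : G.dist y b < G.dist a b) :
    y = p.penultimate := by
  classical
  obtain ⟨q, hq, hql⟩ := hyb.symm.exists_path_of_dist
  refine hG.eq_penultimate_of_adj_end hp hay <|
    hG.mem_support_of_ne_mem_support_of_adj_of_isPath hp hq hay fun ha => ?_
  have := (dist_le (q.takeUntil a ha)).trans (q.length_takeUntil_le_length ha)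
  rw [hql, dist_comm, dist_comm (u := b)] at this
  omega

theorem Connected.dist_lt_dist_add_dist_of_degree_le_one {l : V} [Fintype (G.neighborSet l)]
    (hconn : G.Connected) (hl : G.degree l ≤ 1) (hlb : l ≠ b) (hlc : l ≠ c) :
    G.dist b c < G.dist l b + G.dist l c := by
  obtain ⟨y, hly, hyb⟩ := (hconn l b).exists_adj_dist_add_one_eq hlb
  obtain ⟨z, hlz, hzc⟩ := (hconn l c).exists_adj_dist_add_one_eq hlc
  have hyz : y = z := by
    by_contra hyz
    have : 1 < G.degree l := one_lt_card.mpr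
      ⟨y, (mem_neighborFinset _ _ _).mpr hly, z, (mem_neighborFinset _ _ _).mpr hlz, hyz⟩
    omega
  subst hyz
  have := hconn.dist_triangle (u := b) (v := y) (w := c)
  rw [dist_comm (u := b) (v := y)] at this
  omega

theorem IsTree.eq_of_adj_of_dist_add_one_eq (hT : G.IsTree) {z : V} (hay : G.Adj a y)
    (haz : G.Adj a z) (hyb : G.dist y b + 1 = G.dist a b) (hzb : G.dist z b + 1 = G.dist a b) :
    y = z := by
  obtain ⟨p, hp, -⟩ := (hT.connected b a).exists_path_of_dist
  rw [hT.isAcyclic.eq_penultimate_of_adj_of_dist_lt hp hay (hT.connected y b) (by omega),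
    hT.isAcyclic.eq_penultimate_of_adj_of_dist_lt hp haz (hT.connected z b) (by omega)]

theorem IsTree.dist_eq_add_one_of_adj_of_ne (hT : G.IsTree) {w : V} (hay : G.Adj a y)
    (hyb : G.dist y b + 1 = G.dist a b) (haw : G.Adj a w) (hwy : w ≠ y) :
    G.dist w b = G.dist a b + 1 := by
  rcases hT.dist_eq_dist_add_one_of_adj b haw with h | h
  · rw [dist_comm, dist_comm (u := b)] at h
    exact absurd (hT.eq_of_adj_of_dist_add_one_eq haw hay h.symm hyb) hwy
  · rwa [dist_comm, dist_comm (u := b)] at h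

theorem IsTree.dist_eq_dist_add_dist_of_adj (hT : G.IsTree) (hay : G.Adj a y)
    (hyb : G.dist y b + 1 = G.dist a b) (hyc : G.dist y c = G.dist a c + 1) :
    G.dist b c = G.dist a b + G.dist a c := by
  -- Walking from `a` towards `b`, each step moves away from `c`: the only neighbour closer
  -- to `c` is the vertex just left.
  induction h : G.dist y b using Nat.strong_induction_on generalizing a y with
  | _ n ih =>
    rcases eq_or_ne y b with rfl | hyb'
    · rw [hyc]; simp only [dist_self] at hyb; omega
    obtain ⟨z, hyz, hzb⟩ := (hT.connected y b).exists_adj_dist_add_one_eq hyb'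
    have hza : z ≠ a := by rintro rfl; omega
    have hzc := hT.dist_eq_add_one_of_adj_of_ne (b := c) hay.symm (by omega) hyz hza
    have := ih _ (by omega) hyz hzb hzc rfl
    omega

theorem IsTree.degree_eq_one_of_forall_dist_add_dist_le (hT : G.IsTree)
    [Fintype (G.neighborSet a)] {l : V}
    (hl : G.dist b c < G.dist l b + G.dist l c)
    (hmax : ∀ x, G.dist x b + G.dist x c ≤ G.dist a b + G.dist a c) : G.degree a = 1 := by
  have hoff : G.dist b c < G.dist a b + G.dist a c := hl.trans_le (hmax l)
  have hab : a ≠ b := by rintro rfl; simp at hoff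
  obtain ⟨y, hay, hyb⟩ := (hT.connected a b).exists_adj_dist_add_one_eq hab
  have hnbr : ∀ w, G.Adj a w → w = y := by
    intro w haw
    by_contra hwy
    have hwb := hT.dist_eq_add_one_of_adj_of_ne hay hyb haw hwy
    have hwc : G.dist w c + 1 = G.dist a c := by
      have := hmax w
      rcases hT.dist_eq_dist_add_one_of_adj c haw with h | h <;>
        rw [dist_comm, dist_comm (u := c)] at h <;> omega
    have hyc := hT.dist_eq_add_one_of_adj_of_ne haw hwc hay (Ne.symm hwy)
    have := hT.dist_eq_dist_add_dist_of_adj hay hyb hyc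
    omega
  rw [degree, card_eq_one]
  exact ⟨y, eq_singleton_iff_unique_mem.mpr ⟨(mem_neighborFinset ..).mpr hay,
    fun w hw => hnbr w ((mem_neighborFinset ..).mp hw)⟩⟩

end SimpleGraph

/-- In a tree with at least `3` leaves, every vertex of a triametral triple is a leaf. -/
theorem triametral_triple_vertices_are_leaves {V : Type*} [Fintype V]
    (T : SimpleGraph V) [DecidableRel T.Adj] (hT : T.IsTree)
    (hl : 3 ≤ (Finset.univ.filter fun v : V => T.degree v = 1).card)
    (a b c : V) (htri : T.dist a b + T.dist a c + T.dist b c = T.triameter) :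
    T.degree a = 1 ∧ T.degree b = 1 ∧ T.degree c = 1 := by
  classical
  have exists_off_geodesic (u v : V) : ∃ l, T.dist u v < T.dist l u + T.dist l v := by
    obtain ⟨l, hleaf, hluv⟩ := exists_mem_notMem_of_card_lt_card (s := {u, v})
      ((card_le_two (a := u) (b := v)).trans_lt hl)
    simp only [mem_insert, mem_singleton, not_or] at hluv
    exact ⟨l, hT.connected.dist_lt_dist_add_dist_of_degree_le_one
      (mem_filter.mp hleaf).2.le hluv.1 hluv.2⟩
  have hmax (x y z : V) := SimpleGraph.dist_add_dist_add_dist_le_triameter (G := T) x y z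
  have := T.dist_comm (u := a) (v := b)
  have := T.dist_comm (u := a) (v := c)
  have := T.dist_comm (u := b) (v := c)
  obtain ⟨l₁, hl₁⟩ := exists_off_geodesic b c
  obtain ⟨l₂, hl₂⟩ := exists_off_geodesic a c
  obtain ⟨l₃, hl₃⟩ := exists_off_geodesic a b
  refine ⟨hT.degree_eq_one_of_forall_dist_add_dist_le hl₁ fun x => ?_,
    hT.degree_eq_one_of_forall_dist_add_dist_le hl₂ fun x => ?_,
    hT.degree_eq_one_of_forall_dist_add_dist_le hl₃ fun x => ?_⟩
  · have := hmax x b c; omega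
  · have := hmax x a c; omega
  · have := hmax x a b; omega
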